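/- Let (B,⌊·,·⌋,‖·‖) be an SSDB space, f ∈ PC(B) be a BC-function and g : B → ℝ be a continuous TBC-function. Then P_q(f) − N_q(g) = B, i.e. every c ∈ B can be written c = p − n with p ∈ P_q(f) and n ∈ N_q(g). -/

import Mathlib

open scoped Pointwise

noncomputable section

variable {B : Type*} [NormedAddCommGroup B] [NormedSpace ℝ B]

/-- The quadratic form `q(b) = ½⌊b,b⌋` associated with a bilinear form. -/
def qForm (br : B →ₗ[ℝ] B →ₗ[ℝ] ℝ) (b : B) : ℝ := (1 / 2) * br b b

/-- The intrinsic conjugate `f^@(c) = sup_{b} (⌊b,c⌋ - f(b))`. -/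
def intrinsicConj (br : B →ₗ[ℝ] B →ₗ[ℝ] ℝ) (f : B → EReal) (c : B) : EReal :=
  ⨆ b : B, ((br b c : ℝ) : EReal) - f b

/-- A proper function from `B` into `(-∞,∞]`: never `⊥` and somewhere finite. -/
def ProperFn (f : B → EReal) : Prop := (∀ b, f b ≠ ⊥) ∧ ∃ b, f b ≠ ⊤

/-- Convexity for `(-∞,∞]`-valued functions. -/
def ConvexFn (f : B → EReal) : Prop :=
  ∀ b c : B, ∀ t : ℝ, 0 ≤ t → t ≤ 1 →
    f (t • b + (1 - t) • c) ≤ (t : EReal) * f b + ((1 - t : ℝ) : EReal) * f c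

/-- `A` is q-positive: nonempty and `q(b - c) ≥ 0` for all `b, c ∈ A`. -/
def QPos (br : B →ₗ[ℝ] B →ₗ[ℝ] ℝ) (A : Set B) : Prop :=
  A.Nonempty ∧ ∀ b ∈ A, ∀ c ∈ A, 0 ≤ qForm br (b - c)

/-- `A` is maximally q-positive. -/
def MaxQPos (br : B →ₗ[ℝ] B →ₗ[ℝ] ℝ) (A : Set B) : Prop :=
  QPos br A ∧ ∀ C : Set B, QPos br C → A ⊆ C → C = A

/-- `P_q(f) = {b : f(b) = q(b)}`. -/
def Pq (br : B →ₗ[ℝ] B →ₗ[ℝ] ℝ) (f : B → EReal) : Set B :=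
  {b : B | f b = ((qForm br b : ℝ) : EReal)}

/-- `N_q(g) = {b : g(b) = -q(b)}`. -/
def Nq (br : B →ₗ[ℝ] B →ₗ[ℝ] ℝ) (f : B → EReal) : Set B :=
  {b : B | f b = ((-(qForm br b) : ℝ) : EReal)}

/-- `f` is a BC-function: `f^@(b) ≥ f(b) ≥ q(b)` for all `b`. -/
def IsBC (br : B →ₗ[ℝ] B →ₗ[ℝ] ℝ) (f : B → EReal) : Prop :=
  ∀ b : B, ((qForm br b : ℝ) : EReal) ≤ f b ∧ f b ≤ intrinsicConj br f b

/-- `g` is a TBC-function: `g^@(-b) ≥ g(b) ≥ -q(b)` for all `b`. -/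
def IsTBC (br : B →ₗ[ℝ] B →ₗ[ℝ] ℝ) (g : B → EReal) : Prop :=
  ∀ b : B, ((-(qForm br b) : ℝ) : EReal) ≤ g b ∧ g b ≤ intrinsicConj br g (-b)

/-- The effective domain `dom f = {b : f(b) ∈ ℝ}`. -/
def domE (f : B → EReal) : Set B := {b : B | ∃ r : ℝ, f b = (r : EReal)}

/-- `(B, ⌊·,·⌋, ‖·‖)` is an SSDB space: there is a surjective linear isometry
`ι : B → B*` with `⟨b, ι(c)⟩ = ⌊b,c⌋` for all `b, c`. -/
def IsSSDB (br : B →ₗ[ℝ] B →ₗ[ℝ] ℝ) : Prop :=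
  ∃ ι : B ≃ₗᵢ[ℝ] StrongDual ℝ B, ∀ b c : B, ι c b = br b c

/-!
Fix `c`. The function `k p = ⌊p,c⌋ - q(c) - g(p - c)` is continuous and concave, and the TBC
inequality `g ≥ -q` gives `k ≤ q ≤ f`. Separating the open strict hypograph of `k` from the
epigraph of `f` (Hahn–Banach) yields a continuous affine function between them, which the
SSDB isometry writes as `⌊·,w⌋ + β`. The BC property at `w` gives `q(w) ≤ f(w) ≤ f^@(w) ≤ -β`
and the TBC property at `w - c` gives `-q(w) ≤ β`, so all these inequalities are equalities:
`w ∈ P_q(f)` and `w - c ∈ N_q(g)`.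
-/

theorem ConvexFn.convex_epigraph {f : B → EReal} (hf : ConvexFn f) :
    Convex ℝ {x : B × ℝ | f x.1 ≤ x.2} := by
  intro x hx y hy a b ha hb hab
  obtain rfl : b = 1 - a := by linarith
  calc f (a • x.1 + (1 - a) • y.1)
      ≤ (a : EReal) * f x.1 + ((1 - a : ℝ) : EReal) * f y.1 := hf x.1 y.1 a ha (by linarith)
    _ ≤ (a : EReal) * x.2 + ((1 - a : ℝ) : EReal) * y.2 := by
        gcongr <;> exact_mod_cast ‹_›
    _ = ((a * x.2 + (1 - a) * y.2 : ℝ) : EReal) := by norm_cast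

theorem EReal.exists_eq_coe_of_coe_le_of_ne_top {x : EReal} {a : ℝ} (ha : (a : EReal) ≤ x)
    (hx : x ≠ ⊤) : ∃ v : ℝ, x = v :=
  ⟨x.toReal, (EReal.coe_toReal hx (ne_bot_of_le_ne_bot (EReal.coe_ne_bot a) ha)).symm⟩

theorem StrongDual.apply_prod (L : StrongDual ℝ (B × ℝ)) (p : B) (t : ℝ) :
    L (p, t) = L (p, 0) + t * L (0, 1) := by
  rw [← smul_eq_mul, ← map_smul, ← map_add]
  simp

theorem exists_affine_between_of_concaveOn_le_convexFn {k : B → ℝ} {f : B → EReal}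
    (hk : Continuous k) (hkc : ConcaveOn ℝ Set.univ k) (hf : ConvexFn f) (hdom : ∃ b, f b ≠ ⊤)
    (hkf : ∀ p, (k p : EReal) ≤ f p) :
    ∃ (φ : StrongDual ℝ B) (β : ℝ), ∀ p, k p ≤ φ p + β ∧ ((φ p + β : ℝ) : EReal) ≤ f p := by
  set A : Set (B × ℝ) := {x | x.2 < k x.1}
  set E : Set (B × ℝ) := {x | f x.1 ≤ x.2}
  have hA : Convex ℝ A := by simpa using hkc.convex_strict_hypograph
  have hAo : IsOpen A := isOpen_lt continuous_snd (hk.comp continuous_fst)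
  have hAE : Disjoint A E := Set.disjoint_left.2 fun x hxA hxE =>
    (hkf x.1).not_gt (hxE.trans_lt (EReal.coe_lt_coe_iff.2 hxA))
  obtain ⟨L, s, hLA, hLE⟩ := geometric_hahn_banach_open hA hAo hf.convex_epigraph hAE
  set r := L (0, 1)
  set φ : StrongDual ℝ B := L.comp (ContinuousLinearMap.inl ℝ B ℝ)
  have hL : ∀ p t, L (p, t) = φ p + t * r := L.apply_prod
  have hr : 0 < r := by
    obtain ⟨b, hb⟩ := hdom
    obtain ⟨v, hv⟩ := EReal.exists_eq_coe_of_coe_le_of_ne_top (hkf b) hb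
    have hkv : k b ≤ v := EReal.coe_le_coe_iff.1 (hv ▸ hkf b)
    have h1 := hLA (b, k b - 1) (show k b - 1 < k b by linarith)
    have h2 := hLE (b, v) (show f b ≤ v from hv.le)
    rw [hL] at h1 h2
    nlinarith
  have hφ : ∀ p, (-r⁻¹ • φ) p + s / r = (s - φ p) / r := fun p => by
    change -r⁻¹ * φ p + s / r = _
    field_simp
    ring
  refine ⟨-r⁻¹ • φ, s / r, fun p => ⟨?_, ?_⟩⟩
  · refine le_of_forall_lt fun t ht => ?_
    have := hLA (p, t) ht
    rw [hL] at this
    rw [hφ, lt_div_iff₀ hr]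
    linarith
  · by_cases htop : f p = ⊤
    · simp [htop]
    obtain ⟨v, hv⟩ := EReal.exists_eq_coe_of_coe_le_of_ne_top (hkf p) htop
    have := hLE (p, v) (show f p ≤ v from hv.le)
    rw [hL] at this
    rw [hv, EReal.coe_le_coe_iff, hφ, div_le_iff₀ hr]
    linarith

theorem ConvexOn.concaveOn_linear_sub_comp_sub {g : B → ℝ} (hg : ConvexOn ℝ Set.univ g)
    (ℓ : B →ₗ[ℝ] ℝ) (a : ℝ) (c : B) : ConcaveOn ℝ Set.univ fun p => ℓ p - a - g (p - c) := by
  have hg_shift : ConvexOn ℝ Set.univ fun p => g (p - c) := by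
    simpa [Function.comp_def, sub_eq_neg_add] using hg.translate_right (-c)
  refine ((ℓ.concaveOn convex_univ).sub (hg_shift.add_const a)).congr fun p _ => ?_
  simp only [Pi.sub_apply, Pi.add_apply]
  ring

section Bilinear

variable {br : B →ₗ[ℝ] B →ₗ[ℝ] ℝ}

theorem qForm_sub (hsymm : ∀ b c : B, br b c = br c b) (a b : B) :
    qForm br (a - b) = qForm br a - br a b + qForm br b := by
  unfold qForm
  simp only [map_sub, LinearMap.sub_apply]
  rw [hsymm b a]
  ring

theorem intrinsicConj_le_coe_iff {f : B → EReal} {x : B} {γ : ℝ} :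
    intrinsicConj br f x ≤ γ ↔ ∀ b, ((br b x - γ : ℝ) : EReal) ≤ f b := by
  refine iSup_le_iff.trans (forall_congr' fun b => ?_)
  induction f b using EReal.rec with
  | bot => simp [-EReal.coe_sub]
  | coe v => norm_cast; constructor <;> intro h <;> linarith
  | top => simp

theorem IsSSDB.continuous_apply_left (hssdb : IsSSDB br) (c : B) :
    Continuous fun p => br p c := by
  obtain ⟨ι, hι⟩ := hssdb
  exact (ι c).continuous.congr fun p => hι p c

theorem IsSSDB.exists_apply_left_eq (hssdb : IsSSDB br) (φ : StrongDual ℝ B) :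
    ∃ w, ∀ p, br p w = φ p := by
  obtain ⟨ι, hι⟩ := hssdb
  exact ⟨ι.symm φ, fun p => by rw [← hι, LinearIsometryEquiv.apply_symm_apply]⟩

theorem IsTBC.apply_sub_le {g : B → ℝ} (hsymm : ∀ b c : B, br b c = br c b)
    (htbc : IsTBC br fun b => (g b : EReal)) (c p : B) :
    br p c - qForm br c - g (p - c) ≤ qForm br p := by
  have := EReal.coe_le_coe_iff.1 (htbc (p - c)).1
  rw [qForm_sub hsymm] at this
  linarith

theorem mem_Pq_and_eq_neg_qForm_of_affine_between {f : B → EReal} {g : B → ℝ}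
    (hsymm : ∀ b c : B, br b c = br c b) (hbc : IsBC br f)
    (htbc : IsTBC br fun b => (g b : EReal)) {c w : B} {β : ℝ}
    (hlower : ∀ p, br p c - qForm br c - g (p - c) ≤ br p w + β)
    (hupper : ∀ p, ((br p w + β : ℝ) : EReal) ≤ f p) :
    w ∈ Pq br f ∧ g (w - c) = -qForm br (w - c) := by
  have hf_conj : intrinsicConj br f w ≤ (-β : ℝ) :=
    intrinsicConj_le_coe_iff.2 fun p => by simpa only [sub_neg_eq_add] using hupper p
  have hg_conj :
      intrinsicConj br (fun b => (g b : EReal)) (c - w) ≤ (br c w + β - qForm br c : ℝ) := by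
    refine intrinsicConj_le_coe_iff.2 fun b => EReal.coe_le_coe_iff.2 ?_
    have := hlower (b + c)
    simp only [add_sub_cancel_right, map_add, LinearMap.add_apply, map_sub] at this ⊢
    unfold qForm at this ⊢
    rw [hsymm b c] at *
    linarith
  have hqw_le : qForm br w ≤ -β :=
    EReal.coe_le_coe_iff.1 ((hbc w).1.trans ((hbc w).2.trans hf_conj))
  have hg_lower := EReal.coe_le_coe_iff.1 (htbc (w - c)).1
  have hg_upper : g (w - c) ≤ br c w + β - qForm br c := by
    have := (htbc (w - c)).2
    rw [neg_sub] at this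
    exact EReal.coe_le_coe_iff.1 (this.trans hg_conj)
  rw [qForm_sub hsymm, hsymm w c] at hg_lower ⊢
  have hqw : qForm br w = -β := by linarith
  refine ⟨le_antisymm ?_ (hbc w).1, by linarith⟩
  exact hqw ▸ (hbc w).2.trans hf_conj

end Bilinear

theorem stmt8_general
    (br : B →ₗ[ℝ] B →ₗ[ℝ] ℝ) (hsymm : ∀ b c : B, br b c = br c b)
    (hssdb : IsSSDB br)
    (f : B → EReal) (hfproper : ProperFn f) (hfconv : ConvexFn f) (hbc : IsBC br f)
    (g : B → ℝ) (hgcont : Continuous g) (hgconv : ConvexOn ℝ Set.univ g)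
    (htbc : IsTBC br (fun b : B => ((g b : ℝ) : EReal))) :
    ∀ c : B, ∃ p ∈ Pq br f, ∃ n : B, g n = -(qForm br n) ∧ c = p - n := by
  intro c
  set k : B → ℝ := fun p => br p c - qForm br c - g (p - c)
  have hk_cont : Continuous k :=
    ((hssdb.continuous_apply_left c).sub continuous_const).sub
      (hgcont.comp (continuous_id.sub continuous_const))
  have hk_conc : ConcaveOn ℝ Set.univ k :=
    hgconv.concaveOn_linear_sub_comp_sub (br.flip c) (qForm br c) c
  have hk_le : ∀ p, (k p : EReal) ≤ f p := fun p =>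
    (EReal.coe_le_coe_iff.2 (htbc.apply_sub_le hsymm c p)).trans (hbc p).1
  obtain ⟨φ, β, hφ⟩ :=
    exists_affine_between_of_concaveOn_le_convexFn hk_cont hk_conc hfconv hfproper.2 hk_le
  obtain ⟨w, hw⟩ := hssdb.exists_apply_left_eq φ
  obtain ⟨hwP, hwN⟩ := mem_Pq_and_eq_neg_qForm_of_affine_between hsymm hbc htbc
    (fun p => hw p ▸ (hφ p).1) (fun p => hw p ▸ (hφ p).2)
  exact ⟨w, hwP, w - c, hwN, (sub_sub_cancel w c).symm⟩

/-- in an SSDB space, if `f ∈ PC(B)` is a BC-function and `g : B → ℝ` is a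
continuous (convex) TBC-function, then `P_q(f) - N_q(g) = B`. -/
theorem stmt8 [CompleteSpace B] [Nontrivial B]
    (br : B →ₗ[ℝ] B →ₗ[ℝ] ℝ) (hsymm : ∀ b c : B, br b c = br c b)
    (hssdb : IsSSDB br)
    (f : B → EReal) (hfproper : ProperFn f) (hfconv : ConvexFn f) (hbc : IsBC br f)
    (g : B → ℝ) (hgcont : Continuous g) (hgconv : ConvexOn ℝ Set.univ g)
    (htbc : IsTBC br (fun b : B => ((g b : ℝ) : EReal))) :
    ∀ c : B, ∃ p ∈ Pq br f, ∃ n : B, g n = -(qForm br n) ∧ c = p - n :=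
  stmt8_general br hsymm hssdb f hfproper hfconv hbc g hgcont hgconv htbc
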